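/- Let d ≥ 1, N ≥ 1, f ∈ L_N(ℝ^d), and i ∈ {1,…,d}. Then the function x ↦ R_i f(x), where R_i f(x) is the principal value lim_{ε'→0⁺} ∫_{{y : |x−y| > ε'}} f(y)·(x_i − y_i)/|x−y|^{d+1} dy (which exists for every x), is continuous on ℝ^d. -/

import Mathlib

/-!
After the change of variables `y = x - z`, the truncated transform at level `e` is
`∫_{|z|>e} f(x - z) K(z) dz` with the odd kernel `K(z) = z_i / |z|^(d+1)`. As `K` integrates to
zero over every annulus, the difference of the truncations at levels `δ < e` is
`∫_{δ<|z|≤e} (f(x - z) - f(x)) K(z) dz`. Since `f` is Lipschitz and `|z| |K(z)| ≤ |z|^(1-d)`,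
this is `O(e)` uniformly in `x` (integrate in polar coordinates). So the truncations converge
uniformly to the principal value. Each truncation is continuous in `x` by dominated convergence,
because the truncated kernel is bounded and `f` decays faster than `(1 + |x|)^(-d)`.
-/

open MeasureTheory Filter Topology Real

noncomputable section

abbrev Ed (d : ℕ) := EuclideanSpace ℝ (Fin d)

/-- Truncated Riesz integral: `∫_{‖x-y‖>ε} f(y) (x_i - y_i)/‖x-y‖^(d+1) dy`. -/
noncomputable def truncRiesz (d : ℕ) (i : Fin d) (f : Ed d → ℝ) (x : Ed d) (ε : ℝ) : ℝ :=
  ∫ y in {y : Ed d | ε < ‖x - y‖}, f y * ((x i - y i) / ‖x - y‖ ^ (d + 1))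

/-- The principal value Riesz transform of `f` at `x` exists and equals `L`. -/
def RieszPV (d : ℕ) (i : Fin d) (f : Ed d → ℝ) (x : Ed d) (L : ℝ) : Prop :=
  Tendsto (truncRiesz d i f x) (𝓝[>] (0:ℝ)) (𝓝 L)

/-- The class `L_N(ℝ^d)` with constants `C` and `ε`. -/
structure IsLN (d N : ℕ) (f : Ed d → ℝ) (C ε : ℝ) : Prop where
  smooth : ContDiff ℝ 1 f
  Cpos : 0 < C
  eps_nonneg : 0 ≤ ε
  eps_lt_one : ε < 1
  decay : ∀ x : Ed d, |f x| ≤ C * (1 + ‖x‖) ^ (-(d:ℝ) - N + ε)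
  deriv_decay : ∀ (x : Ed d) (j : Fin d),
      |fderiv ℝ f x (EuclideanSpace.single j 1)| ≤ C * (1 + ‖x‖) ^ (-(d:ℝ) - N - 1 + ε)
  moments : ∀ β : Fin d → ℕ, (∑ j, β j) < N →
      ∫ x : Ed d, (∏ j, (x j) ^ (β j)) * f x = 0

open Metric

section Odd

variable {E : Type*} [AddGroup E] [MeasurableSpace E] [MeasurableNeg E]

theorem setIntegral_eq_zero_of_odd {μ : Measure E} [μ.IsNegInvariant] {s : Set E}
    (hs : MeasurableSet s) (hs_neg : -s = s) {F : E → ℝ} (hF : Function.Odd F) :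
    ∫ z in s, F z ∂μ = 0 := by
  have hodd : Function.Odd (s.indicator F) := fun z => by
    by_cases hz : z ∈ s
    · have hz' : -z ∈ s := by rwa [← Set.mem_neg, hs_neg]
      simp only [Set.indicator_of_mem hz, Set.indicator_of_mem hz', hF z]
    · have hz' : -z ∉ s := by rwa [← Set.mem_neg, hs_neg]
      simp only [Set.indicator_of_notMem hz, Set.indicator_of_notMem hz', neg_zero]
  have h := integral_neg_eq_self (s.indicator F) μ
  rw [funext hodd, integral_neg] at h
  rw [← integral_indicator hs]
  linarith

end Odd

section Decay

variable {E : Type*} [NormedAddCommGroup E]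

theorem one_add_norm_rpow_neg_le {x x₀ : E} (hx : ‖x - x₀‖ ≤ 1) (z : E) {r : ℝ} (hr : 0 ≤ r) :
    (1 + ‖x - z‖) ^ (-r) ≤ 2 ^ r * (1 + ‖x₀ - z‖) ^ (-r) := by
  have hle : (1 + ‖x₀ - z‖) / 2 ≤ 1 + ‖x - z‖ := by
    linarith [norm_sub_le_norm_sub_add_norm_sub x₀ x z, norm_sub_rev x₀ x, norm_nonneg (x - z)]
  calc (1 + ‖x - z‖) ^ (-r) ≤ ((1 + ‖x₀ - z‖) / 2) ^ (-r) :=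
        rpow_le_rpow_of_nonpos (by positivity) hle (neg_nonpos.2 hr)
    _ = 2 ^ r * (1 + ‖x₀ - z‖) ^ (-r) := by
        rw [div_rpow (by positivity) zero_le_two, rpow_neg zero_le_two, div_inv_eq_mul, mul_comm]

variable [NormedSpace ℝ E] [FiniteDimensional ℝ E] [MeasurableSpace E] [BorelSpace E]
  {μ : Measure E} [μ.IsAddHaarMeasure]

theorem continuous_integral_comp_sub_mul {f k : E → ℝ} {C B r : ℝ}
    (hr : Module.finrank ℝ E < r) (hf : Continuous f)
    (hf_decay : ∀ y, |f y| ≤ C * (1 + ‖y‖) ^ (-r))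
    (hk : AEStronglyMeasurable k μ) (hk_bdd : ∀ z, |k z| ≤ B) :
    Continuous fun x => ∫ z, f (x - z) * k z ∂μ := by
  have hC : 0 ≤ C := by simpa using (abs_nonneg _).trans (hf_decay 0)
  have hB : 0 ≤ B := (abs_nonneg _).trans (hk_bdd 0)
  have hr₀ : 0 ≤ r := (Nat.cast_nonneg _).trans hr.le
  refine continuous_iff_continuousAt.2 fun x₀ => continuousAt_of_dominated
    (bound := fun z => C * 2 ^ r * B * (1 + ‖x₀ - z‖) ^ (-r)) ?_ ?_ ?_ ?_
  · exact Eventually.of_forall fun x =>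
      (hf.comp (continuous_const.sub continuous_id)).aestronglyMeasurable.mul hk
  · filter_upwards [closedBall_mem_nhds x₀ one_pos] with x hx
    refine Eventually.of_forall fun z => ?_
    rw [mem_closedBall, dist_eq_norm] at hx
    rw [norm_eq_abs, abs_mul]
    calc |f (x - z)| * |k z| ≤ C * (1 + ‖x - z‖) ^ (-r) * B :=
          mul_le_mul (hf_decay _) (hk_bdd z) (abs_nonneg _) (mul_nonneg hC (by positivity))
      _ ≤ C * (2 ^ r * (1 + ‖x₀ - z‖) ^ (-r)) * B := by
          gcongr; exact one_add_norm_rpow_neg_le hx z hr₀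
      _ = C * 2 ^ r * B * (1 + ‖x₀ - z‖) ^ (-r) := by ring
  · exact ((integrable_one_add_norm hr).comp_sub_left x₀).const_mul _
  · exact Eventually.of_forall fun z =>
      ((hf.comp (continuous_id.sub continuous_const)).mul continuous_const).continuousAt

theorem integrableOn_annulus_of_abs_le {F : E → ℝ} (hF : AEStronglyMeasurable F μ) {δ e B : ℝ}
    (hB : ∀ z, δ < ‖z‖ → |F z| ≤ B) : IntegrableOn F (closedBall 0 e \ closedBall 0 δ) μ :=
  Measure.integrableOn_of_bounded
    ((measure_mono Set.sdiff_subset).trans_lt measure_closedBall_lt_top).ne hF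
    (ae_restrict_of_forall_mem (measurableSet_closedBall.diff measurableSet_closedBall)
      fun z hz => hB z (by simpa using hz.2))

theorem setIntegral_annulus_inv_norm_pow [Nontrivial E] {δ e : ℝ}
    (hδ : 0 ≤ δ) (hδe : δ ≤ e) :
    ∫ z in closedBall (0 : E) e \ closedBall 0 δ, (‖z‖ ^ (Module.finrank ℝ E - 1))⁻¹ ∂μ
      = Module.finrank ℝ E * μ.real (ball 0 1) * (e - δ) := by
  set n := Module.finrank ℝ E
  set ρ : ℝ → ℝ := (Set.Ioc δ e).indicator fun t => (t ^ (n - 1))⁻¹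
  have hρ : (closedBall (0 : E) e \ closedBall 0 δ).indicator (fun z => (‖z‖ ^ (n - 1))⁻¹)
      = fun z => ρ ‖z‖ := by
    ext z
    simp only [ρ, Set.indicator, Set.mem_sdiff, mem_closedBall_zero_iff, Set.mem_Ioc, not_le,
      and_comm]
  have hradial : ∫ t in Set.Ioi (0 : ℝ), t ^ (n - 1) • ρ t = e - δ := by
    have hρ' : Set.EqOn (fun t => t ^ (n - 1) • ρ t) ((Set.Ioc δ e).indicator 1) (Set.Ioi 0) :=
      fun t (ht : 0 < t) => by
        by_cases hmem : t ∈ Set.Ioc δ e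
        · simp [ρ, Set.indicator_of_mem hmem, ht.ne']
        · simp [ρ, Set.indicator_of_notMem hmem]
    rw [setIntegral_congr_fun measurableSet_Ioi hρ', setIntegral_indicator measurableSet_Ioc,
      Set.inter_eq_self_of_subset_right (Set.Ioc_subset_Ioi_self.trans (Set.Ioi_subset_Ioi hδ))]
    simp [hδe]
  rw [← integral_indicator (measurableSet_closedBall.diff measurableSet_closedBall), hρ,
    integral_fun_norm_addHaar μ ρ, hradial, nsmul_eq_mul, smul_eq_mul, mul_assoc]

end Decay

theorem tendstoUniformly_of_abs_sub_le {X : Type*} {T : ℝ → X → ℝ} {g : X → ℝ} {A : ℝ}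
    (hT : ∀ x, Tendsto (T · x) (𝓝[>] 0) (𝓝 (g x)))
    (hA : ∀ x δ e, 0 < δ → δ ≤ e → |T δ x - T e x| ≤ A * e) :
    TendstoUniformly T g (𝓝[>] 0) := by
  have hlim : ∀ x e, 0 < e → |g x - T e x| ≤ A * e := fun x e he =>
    le_of_tendsto (((hT x).sub_const (T e x)).abs) <| by
      filter_upwards [Ioo_mem_nhdsGT he] with δ hδ using hA x δ e hδ.1 hδ.2.le
  rw [Metric.tendstoUniformly_iff]
  intro η hη
  filter_upwards [Ioo_mem_nhdsGT (show 0 < η / (|A| + 1) by positivity)] with e he x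
  rw [dist_eq_norm, norm_eq_abs]
  calc |g x - T e x| ≤ A * e := hlim x e he.1
    _ ≤ |A| * e := mul_le_mul_of_nonneg_right (le_abs_self A) he.1.le
    _ < (|A| + 1) * (η / (|A| + 1)) := by
        nlinarith [he.1, he.2, abs_nonneg A]
    _ = η := by field_simp

section Riesz

variable {d : ℕ} (i : Fin d)

def rieszKernel (z : Ed d) : ℝ := z i / ‖z‖ ^ (d + 1)

theorem rieszKernel_odd : Function.Odd (rieszKernel i) := fun z => by
  simp only [rieszKernel, norm_neg, PiLp.neg_apply, neg_div]

@[fun_prop]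
theorem measurable_rieszKernel : Measurable (rieszKernel i) := by
  unfold rieszKernel; fun_prop

theorem abs_rieszKernel_le (z : Ed d) : |rieszKernel i z| ≤ (‖z‖ ^ d)⁻¹ := by
  rcases (norm_nonneg z).eq_or_lt with hz | hz
  · simp [rieszKernel, ← hz]
  calc |rieszKernel i z| = |z i| / ‖z‖ ^ (d + 1) := by
        rw [rieszKernel, abs_div, abs_of_pos (pow_pos hz _)]
    _ ≤ ‖z‖ / ‖z‖ ^ (d + 1) := by
        gcongr; exact PiLp.norm_apply_le z i
    _ = (‖z‖ ^ d)⁻¹ := by rw [pow_succ, div_mul_cancel_right₀ hz.ne']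

theorem abs_rieszKernel_le_of_le {c : ℝ} (hc : 0 < c) {z : Ed d} (hz : c ≤ ‖z‖) :
    |rieszKernel i z| ≤ (c ^ d)⁻¹ :=
  (abs_rieszKernel_le i z).trans (inv_anti₀ (by positivity) (pow_le_pow_left₀ hc.le hz d))

theorem norm_mul_abs_rieszKernel_le (z : Ed d) :
    ‖z‖ * |rieszKernel i z| ≤ (‖z‖ ^ (d - 1))⁻¹ := by
  rcases (norm_nonneg z).eq_or_lt with hz | hz
  · simp [← hz]
  calc ‖z‖ * |rieszKernel i z| ≤ ‖z‖ * (‖z‖ ^ d)⁻¹ :=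
        mul_le_mul_of_nonneg_left (abs_rieszKernel_le i z) hz.le
    _ = (‖z‖ ^ (d - 1))⁻¹ := by
        rw [← pow_sub_one_mul i.pos.ne', mul_inv, mul_left_comm, mul_inv_cancel₀ hz.ne', mul_one]

theorem truncRiesz_eq_setIntegral (f : Ed d → ℝ) (x : Ed d) (e : ℝ) :
    truncRiesz d i f x e = ∫ z in (closedBall 0 e)ᶜ, f (x - z) * rieszKernel i z := by
  have hpre : (x - ·) ⁻¹' {y : Ed d | e < ‖x - y‖} = (closedBall 0 e)ᶜ := by
    ext z; simp
  rw [truncRiesz, ← hpre, ← (Measure.measurePreserving_sub_left volume x).setIntegral_preimage_emb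
    (MeasurableEquiv.subLeft x).measurableEmbedding]
  simp only [rieszKernel, sub_sub_cancel, PiLp.sub_apply]

variable {f : Ed d → ℝ}

theorem integrableOn_comp_sub_mul_rieszKernel (hf : Integrable f) (x : Ed d) {e : ℝ}
    (he : 0 < e) : IntegrableOn (fun z => f (x - z) * rieszKernel i z) (closedBall 0 e)ᶜ :=
  (hf.comp_sub_left x).integrableOn.mul_bdd (measurable_rieszKernel i).aestronglyMeasurable
    (ae_restrict_of_forall_mem measurableSet_closedBall.compl fun z hz =>
      abs_rieszKernel_le_of_le i he (le_of_lt (by simpa using hz)))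

theorem truncRiesz_sub_truncRiesz (hf : Integrable f) (x : Ed d) {δ e : ℝ} (hδ : 0 < δ)
    (hδe : δ ≤ e) :
    truncRiesz d i f x δ - truncRiesz d i f x e
      = ∫ z in closedBall 0 e \ closedBall 0 δ, (f (x - z) - f x) * rieszKernel i z := by
  have hK : IntegrableOn (rieszKernel i) (closedBall (0 : Ed d) e \ closedBall 0 δ) :=
    integrableOn_annulus_of_abs_le (measurable_rieszKernel i).aestronglyMeasurable
      fun z hz => abs_rieszKernel_le_of_le i hδ hz.le
  have hfK : IntegrableOn (fun z => f (x - z) * rieszKernel i z)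
      (closedBall 0 e \ closedBall 0 δ) :=
    (integrableOn_comp_sub_mul_rieszKernel i hf x hδ).mono_set fun _ hz => hz.2
  rw [truncRiesz_eq_setIntegral, truncRiesz_eq_setIntegral, ← setIntegral_sdiff
    measurableSet_closedBall.compl (integrableOn_comp_sub_mul_rieszKernel i hf x hδ)
    (Set.compl_subset_compl.2 (closedBall_subset_closedBall hδe)), compl_sdiff_compl]
  simp_rw [sub_mul]
  rw [integral_sub hfK (hK.const_mul _), integral_const_mul, setIntegral_eq_zero_of_odd
    (measurableSet_closedBall.diff measurableSet_closedBall) (by ext; simp) (rieszKernel_odd i),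
    mul_zero, sub_zero]

theorem abs_truncRiesz_sub_le (hf : Integrable f) {K : NNReal} (hlip : LipschitzWith K f)
    (x : Ed d) {δ e : ℝ} (hδ : 0 < δ) (hδe : δ ≤ e) :
    |truncRiesz d i f x δ - truncRiesz d i f x e|
      ≤ d * volume.real (ball (0 : Ed d) 1) * K * e := by
  have : Nonempty (Fin d) := ⟨i⟩
  have hradial := setIntegral_annulus_inv_norm_pow (μ := (volume : Measure (Ed d))) hδ.le hδe
  rw [finrank_euclideanSpace_fin] at hradial
  have hbound : ∀ z : Ed d, ‖(f (x - z) - f x) * rieszKernel i z‖ ≤ K * (‖z‖ ^ (d - 1))⁻¹ :=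
    fun z => by
      have hlipz : |f (x - z) - f x| ≤ K * ‖z‖ := by
        simpa [dist_self_sub_left, dist_eq_norm, norm_eq_abs] using hlip.dist_le_mul (x - z) x
      rw [norm_mul, norm_eq_abs, norm_eq_abs]
      calc |f (x - z) - f x| * |rieszKernel i z| ≤ K * ‖z‖ * |rieszKernel i z| := by gcongr
        _ = K * (‖z‖ * |rieszKernel i z|) := mul_assoc _ _ _
        _ ≤ K * (‖z‖ ^ (d - 1))⁻¹ := by gcongr; exact norm_mul_abs_rieszKernel_le i z
  have hbound_int : IntegrableOn (fun z : Ed d => K * (‖z‖ ^ (d - 1))⁻¹)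
      (closedBall 0 e \ closedBall 0 δ) :=
    integrableOn_annulus_of_abs_le (by fun_prop) fun z hz => by
      rw [abs_of_nonneg (by positivity)]
      exact mul_le_mul_of_nonneg_left (inv_anti₀ (by positivity)
        (pow_le_pow_left₀ hδ.le hz.le _)) K.coe_nonneg
  rw [truncRiesz_sub_truncRiesz i hf x hδ hδe, ← norm_eq_abs]
  calc _ ≤ ∫ z in closedBall 0 e \ closedBall 0 δ, K * (‖z‖ ^ (d - 1))⁻¹ :=
        norm_integral_le_of_norm_le hbound_int (Eventually.of_forall hbound)
    _ = d * volume.real (ball (0 : Ed d) 1) * K * (e - δ) := by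
        rw [integral_const_mul, hradial]; ring
    _ ≤ d * volume.real (ball (0 : Ed d) 1) * K * e := by gcongr; linarith

theorem tendstoUniformly_truncRiesz (hf : Integrable f) {K : NNReal} (hlip : LipschitzWith K f)
    {g : Ed d → ℝ} (hg : ∀ x, RieszPV d i f x (g x)) :
    TendstoUniformly (fun e x => truncRiesz d i f x e) g (𝓝[>] 0) :=
  tendstoUniformly_of_abs_sub_le hg fun x _ _ hδ hδe => abs_truncRiesz_sub_le i hf hlip x hδ hδe

theorem continuous_truncRiesz (hf : Continuous f) {C r : ℝ} (hr : (d : ℝ) < r)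
    (hf_decay : ∀ y, |f y| ≤ C * (1 + ‖y‖) ^ (-r)) {e : ℝ} (he : 0 < e) :
    Continuous fun x => truncRiesz d i f x e := by
  have hK : ∀ z, |(closedBall (0 : Ed d) e)ᶜ.indicator (rieszKernel i) z| ≤ (e ^ d)⁻¹ := by
    intro z
    by_cases hz : z ∈ (closedBall (0 : Ed d) e)ᶜ
    · rw [Set.indicator_of_mem hz]
      exact abs_rieszKernel_le_of_le i he (le_of_lt (by simpa using hz))
    · rw [Set.indicator_of_notMem hz, abs_zero]
      positivity
  simp_rw [truncRiesz_eq_setIntegral, ← integral_indicator measurableSet_closedBall.compl,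
    Set.indicator_mul_right]
  exact continuous_integral_comp_sub_mul (by rwa [finrank_euclideanSpace_fin]) hf hf_decay
    ((measurable_rieszKernel i).indicator measurableSet_closedBall.compl).aestronglyMeasurable hK

end Riesz

namespace IsLN

variable {d N : ℕ} {f : Ed d → ℝ} {C ε : ℝ}

theorem abs_le (hf : IsLN d N f C ε) (x : Ed d) :
    |f x| ≤ C * (1 + ‖x‖) ^ (-((d : ℝ) + N - ε)) := by
  convert hf.decay x using 3; ring

theorem dim_lt_decay_exponent (hf : IsLN d N f C ε) (hN : 1 ≤ N) : (d : ℝ) < d + N - ε := by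
  linarith [hf.eps_lt_one, (Nat.one_le_cast (α := ℝ)).2 hN]

theorem integrable (hf : IsLN d N f C ε) (hN : 1 ≤ N) : Integrable f := by
  have hr : (Module.finrank ℝ (Ed d) : ℝ) < d + N - ε := by
    rw [finrank_euclideanSpace_fin]; exact hf.dim_lt_decay_exponent hN
  exact ((integrable_one_add_norm hr).const_mul C).mono'
    hf.smooth.continuous.aestronglyMeasurable (Eventually.of_forall hf.abs_le)

theorem exists_lipschitzWith (hf : IsLN d N f C ε) : ∃ K, LipschitzWith K f := by
  obtain ⟨A, hA, hopNorm⟩ := (EuclideanSpace.basisFun (Fin d) ℝ).toBasis.exists_opNorm_le (F := ℝ)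
  have hpartial : ∀ x j, ‖fderiv ℝ f x (EuclideanSpace.single j 1)‖ ≤ C := fun x j => by
    have hle : (1 + ‖x‖) ^ (-(d : ℝ) - N - 1 + ε) ≤ 1 :=
      rpow_le_one_of_one_le_of_nonpos (by linarith [norm_nonneg x])
        (by linarith [hf.eps_lt_one, (Nat.cast_nonneg d : (0 : ℝ) ≤ d),
          (Nat.cast_nonneg N : (0 : ℝ) ≤ N)])
    exact (hf.deriv_decay x j).trans (mul_le_of_le_one_right hf.Cpos.le hle)
  refine ⟨(A * C).toNNReal, lipschitzWith_of_nnnorm_fderiv_le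
    (hf.smooth.differentiable one_ne_zero) fun x => ?_⟩
  rw [Real.le_toNNReal_iff_coe_le (mul_nonneg hA.le hf.Cpos.le), coe_nnnorm]
  exact hopNorm hf.Cpos.le fun j => by simpa using hpartial x j

end IsLN

theorem riesz_pv_continuous_general (d N : ℕ) (hN : 1 ≤ N)
    (f : Ed d → ℝ) (C ε : ℝ) (hf : IsLN d N f C ε) (i : Fin d)
    (g : Ed d → ℝ) (hg : ∀ x : Ed d, RieszPV d i f x (g x)) :
    Continuous g := by
  obtain ⟨K, hlip⟩ := hf.exists_lipschitzWith
  refine (tendstoUniformly_truncRiesz i (hf.integrable hN) hlip hg).continuous ?_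
  exact Eventually.frequently <| eventually_mem_nhdsWithin.mono fun e he =>
    continuous_truncRiesz i hf.smooth.continuous (hf.dim_lt_decay_exponent hN) hf.abs_le he

/-- For `f ∈ L_N(ℝ^d)`, the (everywhere-defined) principal-value Riesz transform is continuous. -/
theorem riesz_pv_continuous (d N : ℕ) (hd : 1 ≤ d) (hN : 1 ≤ N)
    (f : Ed d → ℝ) (C ε : ℝ) (hf : IsLN d N f C ε) (i : Fin d)
    (g : Ed d → ℝ) (hg : ∀ x : Ed d, RieszPV d i f x (g x)) :
    Continuous g :=
  riesz_pv_continuous_general d N hN f C ε hf i g hg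

end
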